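/- arXiv:2007.10464 — 2 statements merged into one kernel-verified Lean document; each statement's English description precedes it below -/
import Mathlib

section
/- Let Φ be the map on PG(2,8) induced by coordinatewise squaring (the Frobenius), and let Γ = {τ_c : tr(c) = 0}. Then conjugation by Φ permutes the three nontrivial elements of Γ cyclically: Φ ∘ τ_c ∘ Φ⁻¹ = τ_{c²}, and the group generated by Γ and Φ is isomorphic to the alternating group A_4. -/
/-- The elation `τ_c : (x,y,z) ↦ (x + cz, y + c²z, z)` on `F₈³`. -/
noncomputable def tauMap (c : GaloisField 2 3) (p : Fin 3 → GaloisField 2 3) :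
    Fin 3 → GaloisField 2 3 :=
  ![p 0 + c * p 2, p 1 + c ^ 2 * p 2, p 2]

/-- The Frobenius collineation of `PG(2,8)`, coordinatewise squaring. -/
noncomputable def frobMap (p : Fin 3 → GaloisField 2 3) : Fin 3 → GaloisField 2 3 :=
  fun i => (p i) ^ 2

/-!
Since `τ_c τ_d = τ_{c+d}`, `Φ τ_c = τ_{c²} Φ` and `Φ³ = 1`, every element of `G = ⟨Γ, Φ⟩` is
`τ_c Φ^k` with `tr c = 0` and `k < 3`. These maps preserve the four points `(x, x², 1)`,
`tr x = 0`, of the conic `y = x²`, acting on them by `x ↦ x^(2^k) + c`; this action is faithful,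
so `G` embeds in `Sym 4` and `|G| = 4 · 3 = 12` (the trace takes only the values `0, 1`, each
on at most four points since `tr x = b` is a quartic). The image lies in `A₄` because `G` has
no nontrivial character to `{±1}`: `Φ` has order `3`, and `τ_c, τ_{c²}, τ_{c⁴}` are conjugate
under `Φ` with product `τ_{tr c} = 1`.
-/

section CommRing

variable {R : Type*} [CommRing R]

lemma eq_of_pow_two_pow_eq {x : R} (hx : x ^ 8 = x) (hx2 : x ^ 2 ≠ x) {k j : ℕ} (hk : k < 3)
    (hj : j < 3) (h : x ^ 2 ^ k = x ^ 2 ^ j) : k = j := by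
  -- off the diagonal, `x⁸ = x` turns `x^(2^k) = x^(2^j)` into `x² = x`
  interval_cases k <;> interval_cases j <;> first | rfl | (exfalso; apply hx2; grind)

variable [CharP R 2]

def tr : R →+ R where
  toFun c := c + c ^ 2 + c ^ 4
  map_zero' := by simp
  map_add' a b := by
    have h4 : (a + b) ^ 4 = a ^ 4 + b ^ 4 := by
      simp only [show 4 = 2 * 2 from rfl, pow_mul, CharTwo.add_sq]
    rw [CharTwo.add_sq, h4]
    ring

lemma tr_apply (c : R) : tr c = c + c ^ 2 + c ^ 4 := rfl

lemma tr_sq {c : R} (hc : c ^ 8 = c) : tr (c ^ 2) = tr c := by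
  simp only [tr_apply, ← pow_mul]
  linear_combination hc

lemma sq_tr {c : R} (hc : c ^ 8 = c) : tr c ^ 2 = tr c := by
  rw [tr_apply, CharTwo.add_sq, CharTwo.add_sq, ← pow_mul, ← pow_mul]
  linear_combination hc

lemma tr_pow_two_pow {c : R} (hc : c ^ 8 = c) (k : ℕ) : tr (c ^ 2 ^ k) = tr c := by
  induction k with
  | zero => rw [pow_zero, pow_one]
  | succ k ih => rw [pow_succ, pow_mul, tr_sq (by rw [← pow_mul, mul_comm, pow_mul, hc]), ih]

end CommRing

section FieldOfCardEight

open Finset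

variable {R : Type*} [Field R]

lemma pow_eight_eq_self [Finite R] (hR : Nat.card R = 8) (x : R) : x ^ 8 = x := by
  have := Fintype.ofFinite R
  rw [← hR, Nat.card_eq_fintype_card, FiniteField.pow_card]

variable [CharP R 2]

lemma tr_eq_zero_or_one {c : R} (hc : c ^ 8 = c) : tr c = 0 ∨ tr c = 1 :=
  IsIdempotentElem.iff_eq_zero_or_one.1 ((sq _).symm.trans (sq_tr hc))

lemma card_filter_tr_eq_le [Fintype R] [DecidableEq R] (b : R) : #{c | tr c = b} ≤ 4 := by
  set p : Polynomial R := .X + .X ^ 2 + .X ^ 4 - .C b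
  have hp : p.Monic := by unfold p; monicity!
  have hdeg : p.natDegree ≤ 4 := by unfold p; compute_degree
  refine (Polynomial.card_le_degree_of_subset_roots fun c hc => ?_).trans hdeg
  simp only [mem_val, mem_filter, mem_univ, true_and] at hc
  subst hc
  rw [Polynomial.mem_roots hp.ne_zero]
  simp [p, tr_apply]

variable [Finite R]

lemma card_ker_tr (hR : Nat.card R = 8) : Nat.card (tr : R →+ R).ker = 4 := by
  classical
  have := Fintype.ofFinite R
  have hsplit := Finset.card_filter_add_card_filter_not (s := (univ : Finset R)) (tr · = 0)
  have hne : #{c : R | ¬tr c = 0} ≤ 4 := by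
    refine (card_le_card fun c hc => ?_).trans (card_filter_tr_eq_le 1)
    simp only [mem_filter, mem_univ, true_and] at hc ⊢
    exact (tr_eq_zero_or_one (pow_eight_eq_self hR c)).resolve_left hc
  rw [card_univ, ← Nat.card_eq_fintype_card, hR] at hsplit
  rw [← (card_filter_tr_eq_le (R := R) 0).antisymm (by omega), ← Fintype.card_subtype,
    ← Nat.card_eq_fintype_card]
  exact Nat.card_congr (Equiv.subtypeEquivRight fun _ => AddMonoidHom.mem_ker)

lemma exists_mem_ker_tr_sq_ne (hR : Nat.card R = 8) : ∃ x ∈ (tr : R →+ R).ker, x ^ 2 ≠ x := by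
  by_contra! h
  have hsub : ((tr : R →+ R).ker : Set R) ⊆ {0, 1} := fun x hx =>
    IsIdempotentElem.iff_eq_zero_or_one.1 ((sq x).symm.trans (h x hx))
  have := (Set.ncard_le_ncard hsub).trans (Set.ncard_insert_le _ _)
  rw [← Nat.card_coe_set_eq, SetLike.coe_sort_coe, card_ker_tr hR] at this
  simp at this

end FieldOfCardEight

section Endomorphisms

variable {α : Type*}

def Set.bijOnSubmonoid (S : Set α) : Submonoid (Function.End α) where
  carrier := {f | S.BijOn f S}
  mul_mem' hf hg := hf.comp hg
  one_mem' := Set.bijOn_id S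

noncomputable def Set.restrictPerm (S : Set α) : S.bijOnSubmonoid →* Equiv.Perm S where
  toFun f := f.2.equiv
  map_one' := Equiv.ext fun _ => rfl
  map_mul' _ _ := Equiv.ext fun _ => rfl

theorem Function.End.mul_apply (f g : Function.End α) (x : α) : (f * g) x = f (g x) :=
  rfl

end Endomorphisms

lemma Int.units_eq_one_of_pow_three_eq_one {u : ℤˣ} (h : u ^ 3 = 1) : u = 1 := by
  rwa [Int.units_pow_eq_pow_mod_two, pow_one] at h

abbrev F8 := GaloisField 2 3

lemma card_F8 : Nat.card F8 = 8 := GaloisField.card 2 3 (by norm_num)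

noncomputable abbrev K : AddSubgroup F8 := (tr : F8 →+ F8).ker

lemma card_K : Nat.card K = 4 := card_ker_tr card_F8

lemma pow_two_pow_mem_K {x : F8} (hx : x ∈ K) (k : ℕ) : x ^ 2 ^ k ∈ K := by
  rw [AddMonoidHom.mem_ker, tr_pow_two_pow (pow_eight_eq_self card_F8 x)]
  exact hx

noncomputable def τ (c : F8) : Function.End (Fin 3 → F8) := tauMap c

noncomputable def Φ : Function.End (Fin 3 → F8) := frobMap

lemma τ_apply (c : F8) (p : Fin 3 → F8) : τ c p = ![p 0 + c * p 2, p 1 + c ^ 2 * p 2, p 2] :=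
  rfl

lemma Φ_apply (p : Fin 3 → F8) (i : Fin 3) : Φ p i = p i ^ 2 :=
  rfl

lemma τ_mul_τ (c d : F8) : τ c * τ d = τ (c + d) := by
  funext p
  rw [Function.End.mul_apply]
  funext i
  fin_cases i <;> simp [τ_apply, CharTwo.add_sq] <;> ring

lemma τ_zero : τ 0 = 1 := by
  funext p i
  fin_cases i <;> simp [τ_apply] <;> rfl

lemma Φ_mul_τ (c : F8) : Φ * τ c = τ (c ^ 2) * Φ := by
  funext p
  rw [Function.End.mul_apply, Function.End.mul_apply]
  funext i
  fin_cases i <;> simp [τ_apply, Φ_apply, CharTwo.add_sq, mul_pow]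

lemma Φ_pow_mul_τ (k : ℕ) (c : F8) : Φ ^ k * τ c = τ (c ^ 2 ^ k) * Φ ^ k := by
  induction k generalizing c with
  | zero => simp
  | succ k ih =>
    rw [pow_succ, mul_assoc, Φ_mul_τ, ← mul_assoc, ih, mul_assoc, ← pow_succ, ← pow_mul,
      ← pow_succ']

lemma Φ_pow_apply (k : ℕ) (p : Fin 3 → F8) (i : Fin 3) : (Φ ^ k) p i = p i ^ 2 ^ k := by
  induction k generalizing p with
  | zero => simp only [pow_zero, pow_one]; rfl
  | succ k ih => rw [pow_succ, Function.End.mul_apply, ih, Φ_apply, ← pow_mul, ← pow_succ']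

lemma Φ_pow_three : Φ ^ 3 = 1 := by
  funext p i
  exact (Φ_pow_apply 3 p i).trans (pow_eight_eq_self card_F8 _)

noncomputable def parabola (x : F8) : Fin 3 → F8 := ![x, x ^ 2, 1]

lemma parabola_injective : Function.Injective parabola := fun _ _ h => congrFun h 0

lemma τ_mul_Φ_pow_parabola (c x : F8) (k : ℕ) :
    (τ c * Φ ^ k) (parabola x) = parabola (x ^ 2 ^ k + c) := by
  funext i
  fin_cases i <;> simp [Function.End.mul_apply, τ_apply, Φ_pow_apply, parabola, CharTwo.add_sq,
    ← pow_mul, mul_comm]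

noncomputable def G : Submonoid (Function.End (Fin 3 → F8)) :=
  Submonoid.closure ({frobMap} ∪ {f | ∃ c : F8, c + c ^ 2 + c ^ 4 = 0 ∧ f = tauMap c})

lemma Φ_mem_G : Φ ∈ G := Submonoid.subset_closure (Or.inl rfl)

lemma τ_mem_G {c : F8} (hc : c ∈ K) : τ c ∈ G := Submonoid.subset_closure (Or.inr ⟨c, hc, rfl⟩)

lemma mem_G_iff {f : Function.End (Fin 3 → F8)} :
    f ∈ G ↔ ∃ c ∈ K, ∃ k < 3, f = τ c * Φ ^ k := by
  refine ⟨fun hf => ?_, fun ⟨c, hc, k, _, hf⟩ => hf ▸ mul_mem (τ_mem_G hc) (pow_mem Φ_mem_G k)⟩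
  induction hf using Submonoid.closure_induction with
  | mem f hf =>
    rcases hf with rfl | ⟨c, hc, rfl⟩
    · exact ⟨0, zero_mem K, 1, by norm_num, by rw [τ_zero, one_mul, pow_one]; rfl⟩
    · exact ⟨c, hc, 0, by norm_num, by rw [pow_zero, mul_one]; rfl⟩
  | one => exact ⟨0, zero_mem K, 0, by norm_num, by rw [τ_zero, pow_zero, mul_one]⟩
  | mul f g _ _ ihf ihg =>
    obtain ⟨c, hc, k, -, rfl⟩ := ihf
    obtain ⟨d, hd, j, -, rfl⟩ := ihg
    refine ⟨c + d ^ 2 ^ k, add_mem hc (pow_two_pow_mem_K hd k), (k + j) % 3,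
      Nat.mod_lt _ (by norm_num), ?_⟩
    rw [mul_assoc, ← mul_assoc (Φ ^ k), Φ_pow_mul_τ, mul_assoc, ← pow_add, ← mul_assoc, τ_mul_τ,
      ← pow_eq_pow_mod _ Φ_pow_three]

lemma eq_of_eqOn_parabola {c d : F8} {k j : ℕ} (hk : k < 3) (hj : j < 3)
    (h : ∀ x ∈ K, (τ c * Φ ^ k) (parabola x) = (τ d * Φ ^ j) (parabola x)) : c = d ∧ k = j := by
  have h' : ∀ x ∈ K, x ^ 2 ^ k + c = x ^ 2 ^ j + d := fun x hx => by
    simpa only [τ_mul_Φ_pow_parabola, parabola_injective.eq_iff] using h x hx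
  have hcd : c = d := by simpa using h' 0 (zero_mem K)
  obtain ⟨u, hu, hu2⟩ := exists_mem_ker_tr_sq_ne card_F8
  exact ⟨hcd, eq_of_pow_two_pow_eq (pow_eight_eq_self card_F8 u) hu2 hk hj
    (add_right_cancel (hcd ▸ h' u hu))⟩

lemma card_G : Nat.card G = 12 := by
  let e : K × Fin 3 → G := fun p =>
    ⟨τ p.1 * Φ ^ (p.2 : ℕ), mem_G_iff.2 ⟨p.1, p.1.2, p.2, p.2.2, rfl⟩⟩
  have he : Function.Bijective e := by
    refine ⟨fun ⟨c, k⟩ ⟨d, j⟩ h => ?_, fun f => ?_⟩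
    · obtain ⟨hcd, hkj⟩ :=
        eq_of_eqOn_parabola k.2 j.2 fun x _ => congrFun (congrArg Subtype.val h) _
      exact Prod.ext (Subtype.ext hcd) (Fin.ext hkj)
    · obtain ⟨c, hc, k, hk, hf⟩ := mem_G_iff.1 f.2
      exact ⟨(⟨c, hc⟩, ⟨k, hk⟩), Subtype.ext hf.symm⟩
  rw [← Nat.card_congr (Equiv.ofBijective e he), Nat.card_prod, card_K, Nat.card_fin]

noncomputable def conic : Set (Fin 3 → F8) := parabola '' K

lemma card_conic : Nat.card conic = 4 := by
  rw [conic, Nat.card_image_of_injective parabola_injective, ← card_K]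
  rfl

lemma G_le_bijOnSubmonoid_conic : G ≤ conic.bijOnSubmonoid := by
  intro f hf
  obtain ⟨c, hc, k, -, rfl⟩ := mem_G_iff.1 hf
  have hmaps : Set.MapsTo (τ c * Φ ^ k) conic conic := by
    rintro _ ⟨x, hx, rfl⟩
    exact ⟨_, add_mem (pow_two_pow_mem_K hx k) hc, (τ_mul_Φ_pow_parabola c x k).symm⟩
  refine ((Set.toFinite conic).injOn_iff_bijOn_of_mapsTo hmaps).1 ?_
  rintro _ ⟨x, -, rfl⟩ _ ⟨y, -, rfl⟩ h
  rw [τ_mul_Φ_pow_parabola, τ_mul_Φ_pow_parabola, parabola_injective.eq_iff, add_left_inj] at h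
  exact congrArg parabola (iterateFrobenius_inj F8 2 k h)

noncomputable def conicPerm : G →* Equiv.Perm conic :=
  conic.restrictPerm.comp (Submonoid.inclusion G_le_bijOnSubmonoid_conic)

lemma conicPerm_injective : Function.Injective conicPerm := by
  intro f g hfg
  obtain ⟨c, hc, k, hk, hf⟩ := mem_G_iff.1 f.2
  obtain ⟨d, hd, j, hj, hg⟩ := mem_G_iff.1 g.2
  have hfg' : ∀ x ∈ K, (τ c * Φ ^ k) (parabola x) = (τ d * Φ ^ j) (parabola x) := fun x hx => by
    rw [← hf, ← hg]
    exact congrArg Subtype.val (Equiv.ext_iff.1 hfg ⟨parabola x, x, hx, rfl⟩)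
  obtain ⟨rfl, rfl⟩ := eq_of_eqOn_parabola hk hj hfg'
  exact Subtype.ext (hf.trans hg.symm)

lemma monoidHom_G_intUnits_eq_one (χ : G →* ℤˣ) : χ = 1 := by
  have hΦ : χ ⟨Φ, Φ_mem_G⟩ = 1 := Int.units_eq_one_of_pow_three_eq_one <| by
    rw [← map_pow, ← map_one χ]
    exact congrArg χ (Subtype.ext Φ_pow_three)
  have hconj : ∀ c (hc : c ∈ K),
      χ ⟨τ c, τ_mem_G hc⟩ = χ ⟨τ (c ^ 2), τ_mem_G (pow_two_pow_mem_K hc 1)⟩ := by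
    intro c hc
    have := congrArg χ (Subtype.ext (Φ_mul_τ c) : (⟨Φ, Φ_mem_G⟩ * ⟨τ c, τ_mem_G hc⟩ : G) =
      ⟨τ (c ^ 2), τ_mem_G (pow_two_pow_mem_K hc 1)⟩ * ⟨Φ, Φ_mem_G⟩)
    rwa [map_mul, map_mul, hΦ, one_mul, mul_one] at this
  refine MonoidHom.eq_of_eqOn_denseM Submonoid.closure_closure_coe_preimage ?_
  rintro ⟨f, hfG⟩ (rfl | ⟨c, hc, rfl⟩)
  · exact hΦ
  · have hc2 : c ^ 2 ∈ K := pow_two_pow_mem_K hc 1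
    refine Int.units_eq_one_of_pow_three_eq_one ?_
    calc χ ⟨τ c, hfG⟩ ^ 3
        = χ ⟨τ c, hfG⟩ * χ ⟨τ (c ^ 2), τ_mem_G hc2⟩ *
            χ ⟨τ ((c ^ 2) ^ 2), τ_mem_G (pow_two_pow_mem_K hc2 1)⟩ := by
          rw [← hconj (c ^ 2) hc2, ← hconj c hc, pow_three, mul_assoc]
      _ = 1 := by
          rw [← map_mul, ← map_mul, ← map_one χ]
          congr 1
          apply Subtype.ext
          change τ c * τ (c ^ 2) * τ ((c ^ 2) ^ 2) = 1
          rw [τ_mul_τ, τ_mul_τ, ← pow_mul, ← τ_zero]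
          exact congrArg τ hc

/-- Conjugation by the Frobenius `Φ` permutes the nontrivial elements of
`Γ = {τ_c : tr c = 0}` (namely `Φ ∘ τ_c ∘ Φ⁻¹ = τ_{c²}`), and the group
generated by `Γ` and `Φ` (inside the monoid of self-maps of `F₈³` under
composition) is isomorphic to the alternating group `A₄`. -/
theorem stmt_7 :
    (∀ c : GaloisField 2 3, frobMap ∘ tauMap c = tauMap (c ^ 2) ∘ frobMap) ∧
    Nonempty
      ((Submonoid.closure
          ({frobMap} ∪ {f | ∃ c : GaloisField 2 3, c + c ^ 2 + c ^ 4 = 0 ∧ f = tauMap c} :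
            Set (Function.End (Fin 3 → GaloisField 2 3)))) ≃*
        alternatingGroup (Fin 4)) := by
  refine ⟨Φ_mul_τ, ?_⟩
  let e := (Finite.equivFinOfCardEq card_conic).permCongrHom
  let ρ : G →* Equiv.Perm (Fin 4) := e.toMonoidHom.comp conicPerm
  have hρ_even (f : G) : ρ f ∈ alternatingGroup (Fin 4) := Equiv.Perm.mem_alternatingGroup.2
    (DFunLike.congr_fun (monoidHom_G_intUnits_eq_one (Equiv.Perm.sign.comp ρ)) f)
  let ρA := ρ.codRestrict _ hρ_even
  have hρA : Function.Injective ρA := fun _ _ h =>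
    conicPerm_injective (e.injective (congrArg Subtype.val h))
  refine ⟨MulEquiv.ofBijective ρA (hρA.bijective_of_nat_card_le ?_)⟩
  rw [card_G, nat_card_alternatingGroup, Nat.card_fin]
  rfl
end

section
/- In the Ree group Ree(q), q = 3^{2n+1}, the intersection of any two distinct Sylow 3-subgroups is trivial. -/
theorem Nat.coprime_self_pow_sub_one {p k : ℕ} (hp : 1 ≤ p) (hk : k ≠ 0) :
    p.Coprime (p ^ k - 1) := by
  have : (p ^ k - 1).Coprime (p ^ k) :=
    (Nat.coprime_self_sub_left (Nat.one_le_pow _ _ hp)).mpr (Nat.coprime_one_left _)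
  exact (this.coprime_dvd_right (dvd_pow_self p hk)).symm

theorem IsPGroup.eq_bot_of_le_of_coprime {G : Type*} [Group G] {p : ℕ} [Fact p.Prime]
    {H K : Subgroup G} (hH : IsPGroup p H) (hHK : H ≤ K) (hK : p.Coprime (Nat.card K)) :
    H = ⊥ := by
  refine Subgroup.eq_bot_of_card_eq H (hH.card_eq_or_dvd.resolve_right fun hp => ?_)
  exact (Fact.out : p.Prime).ne_one (hK.eq_one_of_dvd (hp.trans (Subgroup.card_dvd_of_le hHK)))

theorem Sylow.inf_eq_bot_of_coprime_card_normalizer_inf {G : Type*} [Group G] {p : ℕ}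
    [Fact p.Prime] (P Q : Sylow p G)
    (hPQ : p.Coprime (Nat.card ↥(Subgroup.normalizer ((P : Subgroup G) : Set G) ⊓
      Subgroup.normalizer ((Q : Subgroup G) : Set G)))) :
    (P : Subgroup G) ⊓ Q = ⊥ :=
  P.isPGroup'.to_inf_left.eq_bot_of_le_of_coprime
    (inf_le_inf Subgroup.le_normalizer Subgroup.le_normalizer) hPQ

theorem stmt_18_general (n q : ℕ) (hq : q = 3 ^ (2 * n + 1))
    (G : Type*) [Group G]
    (hstab : ∀ P Q : Sylow 3 G, P ≠ Q →
      IsCyclic ↥(Subgroup.normalizer ((P : Subgroup G) : Set G) ⊓ Subgroup.normalizer ((Q : Subgroup G) : Set G)) ∧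
      Nat.card ↥(Subgroup.normalizer ((P : Subgroup G) : Set G) ⊓ Subgroup.normalizer ((Q : Subgroup G) : Set G)) = q - 1) :
    ∀ P Q : Sylow 3 G, P ≠ Q → (P : Subgroup G) ⊓ (Q : Subgroup G) = ⊥ := by
  have : Fact (Nat.Prime 3) := ⟨Nat.prime_three⟩
  intro P Q hPQ
  apply P.inf_eq_bot_of_coprime_card_normalizer_inf Q
  rw [(hstab P Q hPQ).2, hq]
  exact Nat.coprime_self_pow_sub_one (by norm_num) (Nat.succ_ne_zero _)

/-- In the Ree group `Ree(q)`, `q = 3^(2n+1)` — a group of order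
`(q³+1)q³(q−1)` in which the stabilizer of any two distinct points of the
2-transitive action on the Sylow 3-subgroups (i.e. the intersection of the
normalizers of two distinct Sylow 3-subgroups) is cyclic of order `q − 1` —
any two distinct Sylow 3-subgroups intersect trivially. -/
theorem stmt_18 (n q : ℕ) (hq : q = 3 ^ (2 * n + 1))
    (G : Type*) [Group G] [Fintype G]
    (hcard : Fintype.card G = (q ^ 3 + 1) * q ^ 3 * (q - 1))
    (hstab : ∀ P Q : Sylow 3 G, P ≠ Q →
      IsCyclic ↥(Subgroup.normalizer ((P : Subgroup G) : Set G) ⊓ Subgroup.normalizer ((Q : Subgroup G) : Set G)) ∧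
      Nat.card ↥(Subgroup.normalizer ((P : Subgroup G) : Set G) ⊓ Subgroup.normalizer ((Q : Subgroup G) : Set G)) = q - 1) :
    ∀ P Q : Sylow 3 G, P ≠ Q → (P : Subgroup G) ⊓ (Q : Subgroup G) = ⊥ :=
  stmt_18_general n q hq G hstab
end
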